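/- Let K be an algebraically closed field, let V ⊆ K^n × P^M be Zariski-closed, and let p : K^n × P^M → K^n be the projection onto the first factor. Then p(V) is Zariski-closed in K^n. -/

import Mathlib

open MvPolynomial

namespace Jelonek

variable {K : Type*}

/-- A subset of affine space is Zariski closed if it is the common zero locus of
a set of polynomials. -/
def ZClosed {σ : Type*} [CommSemiring K] (A : Set (σ → K)) : Prop :=
  ∃ I : Set (MvPolynomial σ K), A = {x | ∀ g ∈ I, eval x g = 0}

def ZOpen {σ : Type*} [CommSemiring K] (U : Set (σ → K)) : Prop := ZClosed Uᶜ

/-- Zariski closure. -/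
def zClosure {σ : Type*} [CommSemiring K] (A : Set (σ → K)) : Set (σ → K) :=
  ⋂₀ {C | ZClosed C ∧ A ⊆ C}

/-- Irreducibility in the Zariski topology. -/
def IrredSet {σ : Type*} [CommSemiring K] (A : Set (σ → K)) : Prop :=
  A.Nonempty ∧ ∀ C₁ C₂ : Set (σ → K), ZClosed C₁ → ZClosed C₂ → A ⊆ C₁ ∪ C₂ →
    A ⊆ C₁ ∨ A ⊆ C₂

/-- There is a parametric curve of degree at most `d` contained in `S` and passing
through `p` : the image of a non-constant polynomial map `K → Kᵐ` whose coordinate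
polynomials have degree at most `d`. -/
def CurveThru [CommSemiring K] {m : ℕ} (d : ℕ) (S : Set (Fin m → K)) (p : Fin m → K) : Prop :=
  ∃ φ : Fin m → Polynomial K,
    (∀ j, (φ j).natDegree ≤ d) ∧
    (∃ t₁ t₂ : K, (fun j => (φ j).eval t₁) ≠ fun j => (φ j).eval t₂) ∧
    (∀ t : K, (fun j => (φ j).eval t) ∈ S) ∧
    ∃ t : K, (fun j => (φ j).eval t) = p

/-- Evaluation of a polynomial map `Kⁿ → Kᵐ`. -/
noncomputable def pmap {n m : ℕ} [CommSemiring K] (F : Fin m → MvPolynomial (Fin n) K) (x : Fin n → K) :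
    Fin m → K := fun j => eval x (F j)

/-- The principal open subset of `X` on which `h ∘ f` does not vanish. -/
abbrev locDom [Field K] {n m : ℕ} (X : Set (Fin n → K)) (F : Fin m → MvPolynomial (Fin n) K)
    (h : MvPolynomial (Fin m) K) : Type _ :=
  {x : Fin n → K // x ∈ X ∧ eval (pmap F x) h ≠ 0}

/-- The coordinate ring of `f⁻¹(D(h))`, realized as a ring of functions: it is generated
by the coordinate functions of the source together with `1/(h ∘ f)`. -/
def locSource [Field K] {n m : ℕ} (X : Set (Fin n → K)) (F : Fin m → MvPolynomial (Fin n) K)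
    (h : MvPolynomial (Fin m) K) : Subring (locDom X F h → K) :=
  Subring.closure
    ((Set.range fun i : Fin n => fun x : locDom X F h => (x : Fin n → K) i) ∪
      {fun x : locDom X F h => (eval (pmap F (x : Fin n → K)) h)⁻¹})

/-- The pullback of the coordinate ring of `D(h)` (on the target), realized as a ring of
functions on `f⁻¹(D(h))`: generated by the components of `f` together with `1/(h ∘ f)`. -/
def locTarget [Field K] {n m : ℕ} (X : Set (Fin n → K)) (F : Fin m → MvPolynomial (Fin n) K)
    (h : MvPolynomial (Fin m) K) : Subring (locDom X F h → K) :=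
  Subring.closure
    ((Set.range fun j : Fin m => fun x : locDom X F h => pmap F (x : Fin n → K) j) ∪
      {fun x : locDom X F h => (eval (pmap F (x : Fin n → K)) h)⁻¹})

/-- `f : X → Kᵐ` is finite (proper) at `y` if there is a basic Zariski-open neighbourhood
`D(h)` of `y` such that the coordinate ring of `f⁻¹(D(h))` is a finite module over the
pullback of the coordinate ring of `D(h)`. -/
def FiniteAt [Field K] {n m : ℕ} (X : Set (Fin n → K)) (F : Fin m → MvPolynomial (Fin n) K)
    (y : Fin m → K) : Prop :=
  ∃ h : MvPolynomial (Fin m) K, eval y h ≠ 0 ∧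
    ∃ (k : ℕ) (t : Fin k → (locDom X F h → K)),
      (∀ i, t i ∈ locSource X F h) ∧
      ∀ r ∈ locSource X F h, ∃ c : Fin k → (locDom X F h → K),
        (∀ i, c i ∈ locTarget X F h) ∧ r = ∑ i, c i * t i

/-- The set of points at which `f : X → Kᵐ` is not finite. -/
def SSet [Field K] {n m : ℕ} (X : Set (Fin n → K)) (F : Fin m → MvPolynomial (Fin n) K) :
    Set (Fin m → K) := {y | ¬ FiniteAt X F y}

/-- `f` is generically finite: some Zariski-open set meeting the closure of the image
has finite fibers over it. -/
def GenericallyFinite [Field K] {n m : ℕ} (X : Set (Fin n → K))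
    (F : Fin m → MvPolynomial (Fin n) K) : Prop :=
  ∃ U : Set (Fin m → K), ZOpen U ∧ (U ∩ zClosure (pmap F '' X)).Nonempty ∧
    ∀ y ∈ U, {x ∈ X | pmap F x = y}.Finite

end Jelonek
namespace Jelonek

variable {K : Type*}

/-- A subset of `ℙⁿ × Kᵐ` is Zariski closed if it is cut out by polynomial equations in
the homogeneous coordinates of the first factor and the affine coordinates of the second
(vanishing being required on every representative of the projective point). -/
def PAClosed [Field K] {n m : ℕ}
    (S : Set (Projectivization K (Fin (n + 1) → K) × (Fin m → K))) : Prop :=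
  ∃ I : Set (MvPolynomial (Fin (n + 1) ⊕ Fin m) K),
    S = {p | ∀ g ∈ I, ∀ (v : Fin (n + 1) → K) (hv : v ≠ 0),
          Projectivization.mk K v hv = p.1 → MvPolynomial.eval (Sum.elim v p.2) g = 0}

/-- Zariski closure in `ℙⁿ × Kᵐ`. -/
def paClosure [Field K] {n m : ℕ}
    (A : Set (Projectivization K (Fin (n + 1) → K) × (Fin m → K))) :
    Set (Projectivization K (Fin (n + 1) → K) × (Fin m → K)) :=
  ⋂₀ {C | PAClosed C ∧ A ⊆ C}

theorem consOne_ne_zero [Field K] {n : ℕ} (x : Fin n → K) :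
    (Fin.cons 1 x : Fin (n + 1) → K) ≠ 0 :=
  fun h => one_ne_zero (α := K) (by simpa using congrFun h 0)

/-- The embedding `Kⁿ → ℙⁿ`, `x ↦ (1 : x₁ : ⋯ : xₙ)`. -/
def projEmb [Field K] {n : ℕ} (x : Fin n → K) : Projectivization K (Fin (n + 1) → K) :=
  Projectivization.mk K (Fin.cons 1 x) (consOne_ne_zero x)

/-- The graph of `f : X → Kᵐ`, viewed inside `ℙⁿ × Kᵐ`. -/
def graphP [Field K] {n m : ℕ} (X : Set (Fin n → K))
    (F : Fin m → MvPolynomial (Fin n) K) :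
    Set (Projectivization K (Fin (n + 1) → K) × (Fin m → K)) :=
  {p | ∃ x ∈ X, p = (projEmb x, pmap F x)}

/-- A subset of `Kⁿ × ℙ(ι → K)` is Zariski closed if it is cut out by polynomial
equations in the affine coordinates of the first factor and the homogeneous coordinates
of the second factor. -/
def APClosed [Field K] {n : ℕ} {ι : Type*} [Fintype ι]
    (S : Set ((Fin n → K) × Projectivization K (ι → K))) : Prop :=
  ∃ I : Set (MvPolynomial (Fin n ⊕ ι) K),
    S = {p | ∀ g ∈ I, ∀ (v : ι → K) (hv : v ≠ 0),
          Projectivization.mk K v hv = p.2 → MvPolynomial.eval (Sum.elim p.1 v) g = 0}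

end Jelonek

/-!
A point `a` lies in the projection iff the forms obtained by substituting `a` into the homogeneous
components (in the projective variables) of the defining equations have a common nonzero zero `v`.
If they do, the vector `(v^β)_{|β| = D}` is nonzero and annihilated by the matrix of degree-`D`
coefficients of all products `X^α * f`, so every maximal minor of that matrix vanishes. If they do
not, the Nullstellensatz puts a power of each `X_i`, hence every monomial of some degree `D`, into
the ideal they generate; then the columns span and some maximal minor is nonzero. Computed with `a`
left as a variable, these minors are polynomials in `a` that cut out the projection.
-/

theorem Matrix.exists_det_ne_zero_of_span_eq_top {K κ τ : Type*} [Field K] [Fintype κ]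
    [DecidableEq κ] (W : τ → κ → K) (hW : Submodule.span K (Set.range W) = ⊤) :
    ∃ s : κ → τ, (Matrix.of fun β γ => W (s γ) β).det ≠ 0 := by
  obtain ⟨ρ, a, -, hspan, hli⟩ := exists_linearIndependent' K W
  let b := Module.Basis.mk hli (by rw [hspan, hW])
  let e := (Pi.basisFun K κ).indexEquiv b
  refine ⟨a ∘ e, ?_⟩
  rw [← isUnit_iff_ne_zero, ← Matrix.isUnit_iff_isUnit_det,
    ← Matrix.linearIndependent_cols_iff_isUnit]
  exact hli.comp e e.injective

theorem Projectivization.forall_mk_eq_imp_iff {K V : Type*} [Field K] [AddCommGroup V]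
    [Module K V] {v : V} (hv : v ≠ 0) (P : V → Prop) :
    (∀ w (hw : w ≠ 0), mk K w hw = mk K v hv → P w) ↔ ∀ c : K, c ≠ 0 → P (c • v) := by
  refine ⟨fun h c hc => h _ (smul_ne_zero hc hv) ((mk_eq_mk_iff' K _ _ _ _).mpr ⟨c, rfl⟩),
    fun h w hw hwv => ?_⟩
  obtain ⟨c, rfl⟩ := (mk_eq_mk_iff' K _ _ _ _).mp hwv
  exact h c (left_ne_zero_of_smul hw)

namespace MvPolynomial

variable {R S σ ι : Type*}

theorem map_homogeneousComponent [CommSemiring R] [CommSemiring S] (f : R →+* S) (d : ℕ)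
    (p : MvPolynomial σ R) :
    map f (homogeneousComponent d p) = homogeneousComponent d (map f p) := by
  ext β
  simp only [coeff_map, coeff_homogeneousComponent]
  split_ifs <;> simp

section Scaling

variable [Fintype σ]

theorem IsHomogeneous.eval_smul [CommSemiring R] {p : MvPolynomial σ R} {d : ℕ}
    (hp : p.IsHomogeneous d) (c : R) (v : σ → R) :
    eval (c • v) p = c ^ d * eval v p := by
  rw [eval_eq', eval_eq', Finset.mul_sum]
  refine Finset.sum_congr rfl fun β hβ => ?_
  have hβd : ∑ i, β i = d := by
    rw [← Finsupp.degree_eq_sum, Finsupp.degree_eq_weight_one]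
    exact hp (mem_support_iff.mp hβ)
  simp only [Pi.smul_apply, smul_eq_mul, mul_pow, Finset.prod_mul_distrib,
    Finset.prod_pow_eq_pow_sum, hβd]
  ring

theorem eval_smul_eq_sum_homogeneousComponent [CommSemiring R] (c : R) (v : σ → R)
    (p : MvPolynomial σ R) :
    eval (c • v) p =
      ∑ d ∈ Finset.range (p.totalDegree + 1), c ^ d * eval v (homogeneousComponent d p) := by
  conv_lhs => rw [← p.sum_homogeneousComponent, map_sum]
  exact Finset.sum_congr rfl fun d _ => (homogeneousComponent_isHomogeneous d p).eval_smul c v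

theorem forall_eval_smul_eq_zero_iff [CommRing R] [IsDomain R] [Infinite R]
    (p : MvPolynomial σ R) (v : σ → R) :
    (∀ c : R, c ≠ 0 → eval (c • v) p = 0) ↔ ∀ d, eval v (homogeneousComponent d p) = 0 := by
  refine ⟨fun h d => ?_, fun h c _ => ?_⟩
  · set Q : Polynomial R := ∑ e ∈ Finset.range (p.totalDegree + 1),
      Polynomial.C (eval v (homogeneousComponent e p)) * Polynomial.X ^ e
    have hQ : Q = 0 := by
      refine Q.eq_zero_of_infinite_isRoot ((Set.finite_singleton 0).infinite_compl.mono ?_)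
      intro c hc
      change Q.eval c = 0
      rw [← h c hc, eval_smul_eq_sum_homogeneousComponent, Polynomial.eval_finsetSum]
      simp only [Polynomial.eval_mul, Polynomial.eval_C, Polynomial.eval_pow, Polynomial.eval_X,
        mul_comm]
    rcases le_or_gt d p.totalDegree with hd | hd
    · simpa [Q, Polynomial.finsetSum_coeff, Polynomial.coeff_C_mul_X_pow,
        Nat.lt_succ_of_le hd] using congrArg (Polynomial.coeff · d) hQ
    · rw [homogeneousComponent_eq_zero _ _ hd, map_zero]
  · simp [eval_smul_eq_sum_homogeneousComponent, h]

end Scaling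

section MonomialsOfDegree

open scoped Pointwise

variable [Fintype ι] [DecidableEq ι]

variable (ι) in
abbrev monomialsOfDegree (D : ℕ) : Finset (ι →₀ ℕ) :=
  Finset.univ.finsuppAntidiag D

theorem mem_monomialsOfDegree {D : ℕ} {β : ι →₀ ℕ} :
    β ∈ monomialsOfDegree ι D ↔ β.degree = D := by
  simp [Finset.mem_finsuppAntidiag, Finsupp.degree_eq_sum]

theorem monomial_mem_of_forall_X_pow_mem [CommSemiring R] [Nonempty ι]
    {J : Ideal (MvPolynomial ι R)} {k : ι → ℕ} (hk : ∀ i, X i ^ k i ∈ J)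
    {β : ι →₀ ℕ} (hβ : β ∈ monomialsOfDegree ι (∑ i, k i)) : monomial β 1 ∈ J := by
  obtain ⟨i, -, hi⟩ := Finset.exists_le_of_sum_le Finset.univ_nonempty
    (by rw [← Finsupp.degree_eq_sum, mem_monomialsOfDegree.mp hβ] : ∑ i, k i ≤ ∑ i, β i)
  have hβ_eq : monomial (β - Finsupp.single i (k i)) 1 * X i ^ k i = monomial β (1 : R) := by
    rw [X_pow_eq_monomial, monomial_mul, one_mul,
      tsub_add_cancel_of_le (Finsupp.single_le_iff.mpr hi)]
  exact hβ_eq ▸ J.mul_mem_left _ (hk i)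

def evalMonomials [CommSemiring R] (D : ℕ) (v : ι → R) : monomialsOfDegree ι D → R :=
  fun β => ∏ i, v i ^ (β : ι →₀ ℕ) i

theorem evalMonomials_ne_zero [CommSemiring R] [NoZeroDivisors R] (D : ℕ) {v : ι → R}
    (hv : v ≠ 0) : evalMonomials D v ≠ 0 := by
  obtain ⟨i, hi⟩ := Function.ne_iff.mp hv
  refine Function.ne_iff.mpr ⟨⟨Finsupp.single i D, mem_monomialsOfDegree.mpr ?_⟩, ?_⟩
  · simp [Finsupp.degree_eq_sum, Finsupp.single_apply]
  · simpa [evalMonomials, Finsupp.single_apply, pow_ite] using pow_ne_zero D hi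

theorem eval_homogeneousComponent_eq_sum [CommSemiring R] (v : ι → R) (D : ℕ)
    (p : MvPolynomial ι R) :
    eval v (homogeneousComponent D p) =
      ∑ β : monomialsOfDegree ι D, coeff (β : ι →₀ ℕ) p * evalMonomials D v β := by
  simp only [evalMonomials]
  rw [eval_eq', Finset.sum_coe_sort (monomialsOfDegree ι D) fun β => coeff β p * ∏ i, v i ^ β i]
  refine Finset.sum_subset (fun β hβ => ?_) (fun β _ hβ => ?_) |>.trans
    (Finset.sum_congr rfl fun β hβ => ?_)
  · rw [mem_monomialsOfDegree, Finsupp.degree_eq_weight_one]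
    exact homogeneousComponent_isHomogeneous D p (mem_support_iff.mp hβ)
  · rw [notMem_support_iff.mp hβ, zero_mul]
  · rw [coeff_homogeneousComponent, if_pos (mem_monomialsOfDegree.mp hβ)]

def coeffMatrix {κ : Type*} [CommSemiring R] (D : ℕ) (P : κ → MvPolynomial ι R) :
    Matrix (monomialsOfDegree ι D) κ R :=
  Matrix.of fun β γ => coeff (β : ι →₀ ℕ) (P γ)

theorem map_coeffMatrix {κ : Type*} [CommSemiring R] [CommSemiring S] (f : R →+* S) (D : ℕ)
    (P : κ → MvPolynomial ι R) :
    (coeffMatrix D P).map f = coeffMatrix D (fun γ => map f (P γ)) := by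
  ext β γ
  simp [coeffMatrix, coeff_map]

theorem evalMonomials_vecMul_coeffMatrix {κ : Type*} [CommSemiring R] (v : ι → R) (D : ℕ)
    (P : κ → MvPolynomial ι R) :
    Matrix.vecMul (evalMonomials D v) (coeffMatrix D P) =
      fun γ => eval v (homogeneousComponent D (P γ)) := by
  funext γ
  simp only [Matrix.vecMul, dotProduct, coeffMatrix, Matrix.of_apply,
    eval_homogeneousComponent_eq_sum, mul_comm]

theorem span_coeff_monomial_mul_eq_top [Field R] {τ : Type*} (g : τ → MvPolynomial ι R) {D : ℕ}
    (hD : ∀ β ∈ monomialsOfDegree ι D, monomial β 1 ∈ Ideal.span (Set.range g)) :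
    Submodule.span R (Set.range fun p : (ι →₀ ℕ) × τ =>
      fun β : monomialsOfDegree ι D => coeff (β : ι →₀ ℕ) (monomial p.1 1 * g p.2)) = ⊤ := by
  let Λ : MvPolynomial ι R →ₗ[R] (monomialsOfDegree ι D → R) :=
    LinearMap.pi fun β => lcoeff R (β : ι →₀ ℕ)
  have hmonomials : Submodule.span R (Set.range fun α : ι →₀ ℕ => monomial α (1 : R)) = ⊤ := by
    rw [← coe_basisMonomials]; exact (basisMonomials ι R).span_eq
  have hideal := Submodule.span_smul_of_span_eq_top hmonomials (Set.range g)
  rw [eq_top_iff, ← (Pi.basisFun R _).span_eq, Submodule.span_le]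
  rintro _ ⟨β, rfl⟩
  have hβ : monomial (β : ι →₀ ℕ) (1 : R) ∈
      Submodule.span R ((Set.range fun α : ι →₀ ℕ => monomial α (1 : R)) • Set.range g) := by
    rw [hideal, Submodule.restrictScalars_mem]; exact hD β β.2
  have hΛβ : Λ (monomial β 1) = Pi.basisFun R _ β := by
    ext γ
    simp only [Λ, LinearMap.pi_apply, lcoeff_apply, coeff_monomial, Pi.basisFun_apply,
      Pi.single_apply, Subtype.ext_iff, eq_comm]
  rw [← hΛβ]
  refine Submodule.span_mono ?_ (Submodule.map_span Λ _ ▸ Submodule.mem_map_of_mem hβ)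
  rintro _ ⟨_, ⟨_, ⟨α, rfl⟩, _, ⟨t, rfl⟩, rfl⟩, rfl⟩
  exact ⟨(α, t), rfl⟩

end MonomialsOfDegree

section ResultantSystem

variable {A K : Type*} [CommRing A] [Fintype ι] [DecidableEq ι]

/-- The classical resultant system of `F`: the maximal minors of the matrix of degree-`D`
coefficients of all products `X^α * f` with `f ∈ F`, for all `D`. -/
def resultantSystem (F : Set (MvPolynomial ι A)) : Set A :=
  {e | ∃ (D : ℕ) (s : monomialsOfDegree ι D → (ι →₀ ℕ) × F),
    e = (coeffMatrix D fun γ => monomial (s γ).1 1 * ((s γ).2 : MvPolynomial ι A)).det}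

theorem map_det_coeffMatrix_monomial_mul [CommRing S] (φ : A →+* S) {F : Set (MvPolynomial ι A)}
    {D : ℕ} (s : monomialsOfDegree ι D → (ι →₀ ℕ) × F) :
    φ (coeffMatrix D fun γ => monomial (s γ).1 1 * ((s γ).2 : MvPolynomial ι A)).det =
      (coeffMatrix D fun γ => monomial (s γ).1 1 * map φ ((s γ).2 : MvPolynomial ι A)).det := by
  rw [RingHom.map_det, RingHom.mapMatrix_apply, map_coeffMatrix]
  simp only [map_mul, map_monomial, map_one]

variable [Field K] (φ : A →+* K) {F : Set (MvPolynomial ι A)}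

theorem map_eq_zero_of_mem_resultantSystem (hF : ∀ f ∈ F, ∃ d, f.IsHomogeneous d)
    {v : ι → K} (hv : v ≠ 0) (hvF : ∀ f ∈ F, eval v (map φ f) = 0) {e : A}
    (he : e ∈ resultantSystem F) : φ e = 0 := by
  obtain ⟨D, s, rfl⟩ := he
  rw [map_det_coeffMatrix_monomial_mul, ← Matrix.exists_vecMul_eq_zero_iff]
  refine ⟨_, evalMonomials_ne_zero D hv, ?_⟩
  rw [evalMonomials_vecMul_coeffMatrix]
  funext γ
  obtain ⟨α, f, hf⟩ := s γ
  obtain ⟨d, hd⟩ := hF f hf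
  have hhom : (monomial α 1 * map φ f).IsHomogeneous (α.degree + d) :=
    (isHomogeneous_monomial _ rfl).mul (hd.map φ)
  rw [homogeneousComponent_of_mem hhom]
  split_ifs <;> simp [hvF f hf]

theorem exists_mem_resultantSystem_map_ne_zero [IsAlgClosed K] [Nonempty ι]
    (hzero : ∀ v : ι → K, (∀ f ∈ F, eval v (map φ f) = 0) → v = 0) :
    ∃ e ∈ resultantSystem F, φ e ≠ 0 := by
  set J := Ideal.span (Set.range fun f : F => map φ (f : MvPolynomial ι A))
  have hX : ∀ i, ∃ k, (X i : MvPolynomial ι K) ^ k ∈ J := fun i => by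
    rw [← Ideal.mem_radical_iff, ← vanishingIdeal_zeroLocus_eq_radical (K := K),
      mem_vanishingIdeal_iff]
    intro x hx
    have hx0 : x = 0 := hzero x fun f hf => by
      simpa using (mem_zeroLocus_iff.mp hx) _ (Ideal.subset_span ⟨⟨f, hf⟩, rfl⟩)
    simp [hx0]
  choose k hk using hX
  obtain ⟨s, hs⟩ := Matrix.exists_det_ne_zero_of_span_eq_top _
    (span_coeff_monomial_mul_eq_top _ fun β => monomial_mem_of_forall_X_pow_mem hk)
  exact ⟨_, ⟨_, s, rfl⟩, by rwa [map_det_coeffMatrix_monomial_mul]⟩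

theorem exists_ne_zero_forall_eval_map_eq_zero_iff [IsAlgClosed K] [Nonempty ι]
    (hF : ∀ f ∈ F, ∃ d, f.IsHomogeneous d) :
    (∃ v : ι → K, v ≠ 0 ∧ ∀ f ∈ F, eval v (map φ f) = 0) ↔ ∀ e ∈ resultantSystem F, φ e = 0 := by
  refine ⟨fun ⟨v, hv, hvF⟩ e he => map_eq_zero_of_mem_resultantSystem φ hF hv hvF he,
    fun h => by_contra fun hno => ?_⟩
  obtain ⟨e, he, hφe⟩ := exists_mem_resultantSystem_map_ne_zero φ
    fun v hvF => by_contra fun hv => hno ⟨v, hv, hvF⟩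
  exact hφe (h e he)

end ResultantSystem

section SumVariables

variable [CommSemiring R]

noncomputable def sumToIterRight : MvPolynomial (σ ⊕ ι) R →+* MvPolynomial ι (MvPolynomial σ R) :=
  eval₂Hom (C.comp C) (Sum.elim (C ∘ X) X)

theorem eval_map_eval_sumToIterRight (a : σ → R) (v : ι → R) (g : MvPolynomial (σ ⊕ ι) R) :
    eval v (map (eval a) (sumToIterRight g)) = eval (Sum.elim a v) g := by
  have h : (eval v).comp ((map (eval a)).comp sumToIterRight) = eval (Sum.elim a v) := by
    apply ringHom_ext
    · intro c; simp [sumToIterRight]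
    · rintro (i | j) <;> simp [sumToIterRight]
  exact RingHom.congr_fun h g

def homogeneousParts (I : Set (MvPolynomial (σ ⊕ ι) R)) :
    Set (MvPolynomial ι (MvPolynomial σ R)) :=
  Set.range fun p : I × ℕ =>
    homogeneousComponent p.2 (sumToIterRight (p.1 : MvPolynomial (σ ⊕ ι) R))

theorem isHomogeneous_of_mem_homogeneousParts {I : Set (MvPolynomial (σ ⊕ ι) R)}
    {f : MvPolynomial ι (MvPolynomial σ R)} (hf : f ∈ homogeneousParts I) :
    ∃ d, f.IsHomogeneous d := by
  obtain ⟨⟨g, d⟩, rfl⟩ := hf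
  exact ⟨d, homogeneousComponent_isHomogeneous d _⟩

end SumVariables

theorem fst_image_setOf_forall_eval_eq_zero {K : Type*} [Field K] [Infinite K] [Fintype ι]
    (I : Set (MvPolynomial (σ ⊕ ι) K)) :
    Prod.fst '' {p : (σ → K) × Projectivization K (ι → K) | ∀ g ∈ I, ∀ (v : ι → K) (hv : v ≠ 0),
      Projectivization.mk K v hv = p.2 → eval (Sum.elim p.1 v) g = 0} =
    {a | ∃ v : ι → K, v ≠ 0 ∧ ∀ f ∈ homogeneousParts I, eval v (map (eval a) f) = 0} := by
  ext a
  simp only [Set.mem_image, Set.mem_ofPred_eq, Prod.exists, exists_and_right, exists_eq_right]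
  have hfiber : ∀ (v : ι → K) (hv : v ≠ 0),
      (∀ g ∈ I, ∀ (w : ι → K) (hw : w ≠ 0), Projectivization.mk K w hw =
        Projectivization.mk K v hv → eval (Sum.elim a w) g = 0) ↔
      ∀ f ∈ homogeneousParts I, eval v (map (eval a) f) = 0 := fun v hv => by
    simp only [Projectivization.forall_mk_eq_imp_iff hv, ← eval_map_eval_sumToIterRight,
      forall_eval_smul_eq_zero_iff, homogeneousParts, Set.forall_mem_range, Prod.forall,
      Subtype.forall, map_homogeneousComponent]
  constructor
  · rintro ⟨q, hq⟩
    induction q using Projectivization.ind with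
    | h v hv => exact ⟨v, hv, (hfiber v hv).mp hq⟩
  · rintro ⟨v, hv, hvF⟩
    exact ⟨_, (hfiber v hv).mpr hvF⟩

end MvPolynomial

/-- the projection `Kⁿ × ℙ^M → Kⁿ` maps Zariski-closed sets to
Zariski-closed sets (completeness of projective space). -/
theorem stmt8 {K : Type*} [Field K] [IsAlgClosed K] {n M : ℕ}
    (V : Set ((Fin n → K) × Projectivization K (Fin (M + 1) → K)))
    (hV : Jelonek.APClosed V) :
    Jelonek.ZClosed (Prod.fst '' V) := by
  obtain ⟨I, rfl⟩ := hV
  refine ⟨resultantSystem (homogeneousParts I), ?_⟩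
  rw [fst_image_setOf_forall_eval_eq_zero]
  ext a
  exact exists_ne_zero_forall_eval_map_eq_zero_iff (eval a)
    fun _ => isHomogeneous_of_mem_homogeneousParts
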